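/- Let J : ℝ → Matrix (Fin 3) (Fin 3) ℝ be differentiable at 0 with J(0) = 1 (the identity matrix). Define C(t) = (det J(t))⁻¹ • J(t)ᵀ * J(t) and A(t) = det(J(t)) • J(t)⁻¹ * (J(t)⁻¹)ᵀ. Then C'(0) = − trace(J'(0)) • 1 + (J'(0))ᵀ + J'(0) and A'(0) = trace(J'(0)) • 1 − J'(0) − (J'(0))ᵀ; in particular A'(0) = − C'(0). -/

import Mathlib

/-!
At the identity both coefficients are differentiated by the product rule from three elementary
derivatives: the transpose is linear, the determinant has derivative `tr J'` (in the Leibniz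
expansion only the identity permutation contributes to first order), and the inverse has
derivative `-J'`, because `J(t)⁻¹ - J(x)⁻¹ = -J(t)⁻¹ (J(t) - J(x)) J(x)⁻¹` and inversion is
continuous.
-/

open Matrix

attribute [local instance] Matrix.normedAddCommGroup Matrix.normedSpace

open Filter Topology Finset Equiv

section

variable {𝕜 : Type*} [NontriviallyNormedField 𝕜] {m n p : Type*} {x : 𝕜}

theorem HasDerivAt.matrix_transpose [Fintype m] [Fintype n] {A : 𝕜 → Matrix m n 𝕜}
    {A' : Matrix m n 𝕜} (hA : HasDerivAt A A' x) : HasDerivAt (fun t => (A t)ᵀ) A'ᵀ x :=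
  hasDerivAt_pi.2 fun j => hasDerivAt_pi.2 fun i => hasDerivAt_pi.1 (hasDerivAt_pi.1 hA i) j

theorem HasDerivAt.matrix_mul [Fintype n] [Fintype p] {A : 𝕜 → Matrix m n 𝕜}
    {B : 𝕜 → Matrix n p 𝕜} {A' : Matrix m n 𝕜} {B' : Matrix n p 𝕜} (hA : HasDerivAt A A' x)
    (hB : HasDerivAt B B' x) :
    HasDerivAt (fun t => A t * B t) (A' * B x + A x * B') x := by
  refine hasDerivAt_pi.2 fun i => hasDerivAt_pi.2 fun j => ?_
  have hAik k := hasDerivAt_pi.1 (hasDerivAt_pi.1 hA i) k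
  have hBkj k := hasDerivAt_pi.1 (hasDerivAt_pi.1 hB k) j
  simp only [Matrix.add_apply, mul_apply]
  rw [← sum_add_distrib]
  exact HasDerivAt.fun_sum fun k _ => (hAik k).mul (hBkj k)

variable [Fintype n] [DecidableEq n]

theorem HasDerivAt.matrix_inv {J : 𝕜 → Matrix n n 𝕜} {J' : Matrix n n 𝕜}
    (hJ : HasDerivAt J J' x) (hx : (J x).det ≠ 0) :
    HasDerivAt (fun t => (J t)⁻¹) (-((J x)⁻¹ * J' * (J x)⁻¹)) x := by
  have hdet : ContinuousAt (fun t => (J t).det) x :=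
    continuous_id.matrix_det.continuousAt.comp hJ.continuousAt
  have hinv : ContinuousAt (fun t => (J t)⁻¹) x :=
    (continuousAt_matrix_inv _ (by simpa using continuousAt_inv₀ hx)).comp hJ.continuousAt
  have hslope : ∀ᶠ t in 𝓝[≠] x,
      -((J t)⁻¹ * slope J x t * (J x)⁻¹) = slope (fun t => (J t)⁻¹) x t := by
    filter_upwards [nhdsWithin_le_nhds (hdet.eventually_ne hx)] with t ht
    have inv_sub_inv : (J t)⁻¹ * (J t - J x) * (J x)⁻¹ = (J x)⁻¹ - (J t)⁻¹ := by
      rw [Matrix.mul_sub, Matrix.sub_mul, nonsing_inv_mul _ (isUnit_iff_ne_zero.2 ht),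
        Matrix.mul_assoc, mul_nonsing_inv _ (isUnit_iff_ne_zero.2 hx), Matrix.one_mul,
        Matrix.mul_one]
    rw [slope_def_module, slope_def_module, Matrix.mul_smul, Matrix.smul_mul, inv_sub_inv,
      ← smul_neg, neg_sub]
  refine hasDerivAt_iff_tendsto_slope.2 (Tendsto.congr' hslope ?_)
  exact ((hinv.tendsto.mono_left nhdsWithin_le_nhds).mul hJ.tendsto_slope |>.mul_const _).neg

theorem Matrix.prod_one_apply_perm_erase_eq_zero {R : Type*} [CommRing R] {σ : Perm n}
    (hσ : σ ≠ 1) (i : n) : ∏ j ∈ univ.erase i, (1 : Matrix n n R) (σ j) j = 0 := by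
  obtain ⟨j, hji, hj⟩ : ∃ j, j ≠ i ∧ σ j ≠ j := by
    obtain ⟨k, hk⟩ : ∃ k, σ k ≠ k := by simpa [Perm.ext_iff] using hσ
    by_cases hki : k = i
    · exact ⟨σ k, hki ▸ hk, fun h => hk (σ.injective h)⟩
    · exact ⟨k, hki, hk⟩
  exact prod_eq_zero (mem_erase.2 ⟨hji, mem_univ j⟩) (one_apply_ne hj)

theorem HasDerivAt.matrix_det_of_eq_one {J : 𝕜 → Matrix n n 𝕜} {J' : Matrix n n 𝕜}
    (hJ : HasDerivAt J J' x) (hx : J x = 1) : HasDerivAt (fun t => (J t).det) J'.trace x := by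
  have hentry i j : HasDerivAt (fun t => J t i j) (J' i j) x :=
    hasDerivAt_pi.1 (hasDerivAt_pi.1 hJ i) j
  simp only [det_apply']
  have hleibniz := HasDerivAt.fun_sum fun σ (_ : σ ∈ (univ : Finset (Perm n))) =>
    (HasDerivAt.fun_finsetProd fun i (_ : i ∈ univ) => hentry (σ i) i).const_mul
      ((Perm.sign σ : ℤ) : 𝕜)
  refine hleibniz.congr_deriv ?_
  rw [sum_eq_single 1 (fun σ _ hσ => by simp [hx, prod_one_apply_perm_erase_eq_zero hσ])
    (by simp)]
  simp [hx, trace]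

theorem hasDerivAt_det_inv_smul_transpose_mul_self {J : 𝕜 → Matrix n n 𝕜}
    {J' : Matrix n n 𝕜} (hJ : HasDerivAt J J' x) (hx : J x = 1) :
    HasDerivAt (fun t => (J t).det⁻¹ • ((J t)ᵀ * J t)) (-J'.trace • 1 + J'ᵀ + J') x := by
  refine (((hJ.matrix_det_of_eq_one hx).inv (by simp [hx])).smul
    (hJ.matrix_transpose.matrix_mul hJ)).congr_deriv ?_
  simp only [Pi.inv_apply, hx, det_one, inv_one, transpose_one, Matrix.one_mul, Matrix.mul_one,
    smul_add, one_smul, one_pow, div_one, neg_smul]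
  abel

theorem hasDerivAt_det_smul_inv_mul_transpose_inv {J : 𝕜 → Matrix n n 𝕜}
    {J' : Matrix n n 𝕜} (hJ : HasDerivAt J J' x) (hx : J x = 1) :
    HasDerivAt (fun t => (J t).det • ((J t)⁻¹ * ((J t)⁻¹)ᵀ))
      (J'.trace • 1 - J' - J'ᵀ) x := by
  have hinv := hJ.matrix_inv (by simp [hx])
  refine ((hJ.matrix_det_of_eq_one hx).smul
    (hinv.matrix_mul hinv.matrix_transpose)).congr_deriv ?_
  simp only [hx, det_one, inv_one, Matrix.one_mul, Matrix.mul_one, transpose_one,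
    transpose_neg, smul_add, smul_neg, one_smul]
  abel

end

/-- Derivatives at `t = 0` of the deformation coefficients when `J 0 = 1`:
`C'(0) = -tr(J'(0)) • 1 + J'(0)ᵀ + J'(0)`, `A'(0) = tr(J'(0)) • 1 - J'(0) - J'(0)ᵀ`,
and in particular `A'(0) = -C'(0)`. -/
theorem deriv_coefficients_at_identity
    (J : ℝ → Matrix (Fin 3) (Fin 3) ℝ) (J' : Matrix (Fin 3) (Fin 3) ℝ)
    (hJ : HasDerivAt J J' 0) (hJ0 : J 0 = 1)
    (C A : ℝ → Matrix (Fin 3) (Fin 3) ℝ)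
    (hC : ∀ t, C t = ((J t).det)⁻¹ • ((J t)ᵀ * J t))
    (hA : ∀ t, A t = (J t).det • ((J t)⁻¹ * ((J t)⁻¹)ᵀ)) :
    HasDerivAt C (-(Matrix.trace J') • (1 : Matrix (Fin 3) (Fin 3) ℝ) + J'ᵀ + J') 0 ∧
    HasDerivAt A ((Matrix.trace J') • (1 : Matrix (Fin 3) (Fin 3) ℝ) - J' - J'ᵀ) 0 ∧
    (Matrix.trace J') • (1 : Matrix (Fin 3) (Fin 3) ℝ) - J' - J'ᵀ
      = -(-(Matrix.trace J') • (1 : Matrix (Fin 3) (Fin 3) ℝ) + J'ᵀ + J') := by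
  obtain rfl : C = _ := funext hC
  obtain rfl : A = _ := funext hA
  refine ⟨hasDerivAt_det_inv_smul_transpose_mul_self hJ hJ0,
    hasDerivAt_det_smul_inv_mul_transpose_inv hJ hJ0, ?_⟩
  rw [neg_smul]
  abel
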